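/- arXiv:quant-ph/0007043 — 5 statements merged into one kernel-verified Lean document; each statement's English description precedes it below -/
import Mathlib

section
/- Let α ≠ 0 be real, let W be the N×N matrix with all entries equal to 1/N (so W = |w⟩⟨w| for the uniform superposition |w⟩), and let ρ = ((1 - α/N)/N)·𝟙 + (α/N)·W. Then for an N×N complex matrix M, the expectation value Tr(M · U_f ρ U_f^†) is invariant under all permutations of the arguments of f (i.e., Tr(M · U_{f∘σ} ρ U_{f∘σ}^†) = Tr(M · U_f ρ U_f^†) for every permutation σ of Fin N and every f : Fin N → Bool) if and only if M can be written as M = c·W + D + A, where c is a complex scalar, D is a diagonal matrix, and A is an antisymmetric matrix (Aᵀ = -A). -/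
open Matrix BigOperators

/-- The sign `(-1)^{f j}` as a complex number. -/
noncomputable def signC (b : Bool) : ℂ := if b then -1 else 1

/-- The Oracle unitary `U_f`, diagonal with entries `(-1)^{f j}`. -/
noncomputable def Uf {N : ℕ} (f : Fin N → Bool) : Matrix (Fin N) (Fin N) ℂ :=
  Matrix.diagonal fun j => signC (f j)

/-- `W = |w⟩⟨w|`: the `N × N` matrix with all entries `1/N`. -/
noncomputable def Wmat (N : ℕ) : Matrix (Fin N) (Fin N) ℂ :=
  Matrix.of fun _ _ => 1 / (N : ℂ)

lemma signC_sq (b : Bool) : signC b * signC b = 1 := by cases b <;> simp [signC]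

lemma star_signC (b : Bool) : star (signC b) = signC b := by cases b <;> simp [signC]

lemma UfH {N : ℕ} (f : Fin N → Bool) : (Uf f)ᴴ = Uf f := by
  ext i j
  rcases eq_or_ne i j with h | h
  · simp [Uf, Matrix.conjTranspose_apply, Matrix.diagonal_apply, h, star_signC]
  · simp [Uf, Matrix.conjTranspose_apply, Matrix.diagonal_apply, h, h.symm, star_signC]

lemma Uf_mul_Uf {N : ℕ} (f : Fin N → Bool) : Uf f * Uf f = 1 := by
  simp only [Uf, Matrix.diagonal_mul_diagonal]
  rw [show (fun j => signC (f j) * signC (f j)) = fun _ => (1:ℂ) from funext fun j => signC_sq _]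
  exact Matrix.diagonal_one

noncomputable def Qf {N : ℕ} (M : Matrix (Fin N) (Fin N) ℂ) (f : Fin N → Bool) : ℂ :=
  ∑ j, ∑ k, M j k * signC (f j) * signC (f k)

lemma trace_formula {N : ℕ} (a b : ℂ) (M : Matrix (Fin N) (Fin N) ℂ) (f : Fin N → Bool) :
    (M * (Uf f * (a • (1 : Matrix (Fin N) (Fin N) ℂ) + b • Wmat N) * (Uf f)ᴴ)).trace
      = a * M.trace + b / (N : ℂ) * Qf M f := by
  rw [UfH]
  have h1 : Uf f * (a • (1 : Matrix (Fin N) (Fin N) ℂ) + b • Wmat N) * Uf f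
      = a • (1 : Matrix (Fin N) (Fin N) ℂ) + b • (Uf f * Wmat N * Uf f) := by
    rw [mul_add, add_mul, Matrix.mul_smul, Matrix.smul_mul, Matrix.mul_smul, Matrix.smul_mul,
      mul_one, Uf_mul_Uf]
  rw [h1, mul_add, Matrix.trace_add, Matrix.mul_smul, Matrix.trace_smul, Matrix.mul_smul,
    Matrix.trace_smul, mul_one, smul_eq_mul, smul_eq_mul]
  congr 1
  have hX : ∀ k j, (Uf f * Wmat N * Uf f) k j = signC (f k) * (1/(N:ℂ)) * signC (f j) := by
    intro k j
    simp [Uf, Wmat, Matrix.mul_diagonal, Matrix.diagonal_mul]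
  have h2 : (M * (Uf f * Wmat N * Uf f)).trace = (1/(N:ℂ)) * Qf M f := by
    set X := Uf f * Wmat N * Uf f with hXdef
    simp only [Matrix.trace, Matrix.diag, Matrix.mul_apply, Qf, hX]
    rw [Finset.mul_sum]
    refine Finset.sum_congr rfl fun j _ => ?_
    rw [Finset.mul_sum]
    refine Finset.sum_congr rfl fun k _ => ?_
    ring
  rw [h2]; ring

lemma Qf_add {N : ℕ} (M M' : Matrix (Fin N) (Fin N) ℂ) (f : Fin N → Bool) :
    Qf (M + M') f = Qf M f + Qf M' f := by
  simp [Qf, add_mul, Finset.sum_add_distrib]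

lemma Qf_smul {N : ℕ} (c : ℂ) (M : Matrix (Fin N) (Fin N) ℂ) (f : Fin N → Bool) :
    Qf (c • M) f = c * Qf M f := by
  simp only [Qf, Matrix.smul_apply, smul_eq_mul, Finset.mul_sum]
  exact Finset.sum_congr rfl fun j _ => Finset.sum_congr rfl fun k _ => by ring

lemma Qf_diag {N : ℕ} {D : Matrix (Fin N) (Fin N) ℂ} (hD : D.IsDiag) (f : Fin N → Bool) :
    Qf D f = D.trace := by
  unfold Qf Matrix.trace
  refine Finset.sum_congr rfl fun j _ => ?_
  rw [Finset.sum_eq_single j]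
  · rw [mul_assoc, signC_sq, mul_one]; rfl
  · intro k _ hk
    rw [hD (fun h => hk h.symm)]; ring
  · intro h; exact absurd (Finset.mem_univ j) h

lemma Qf_anti {N : ℕ} {A : Matrix (Fin N) (Fin N) ℂ} (hA : Aᵀ = -A) (f : Fin N → Bool) :
    Qf A f = 0 := by
  have key : ∀ j k, A j k = - A k j := by
    intro j k
    have := congrFun (congrFun hA k) j
    simpa [Matrix.transpose_apply, Matrix.neg_apply] using this
  have h : Qf A f = - Qf A f := by
    calc Qf A f = ∑ k, ∑ j, A j k * signC (f j) * signC (f k) := Finset.sum_comm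
    _ = ∑ k, ∑ j, -(A k j * signC (f k) * signC (f j)) := by
        refine Finset.sum_congr rfl fun k _ => Finset.sum_congr rfl fun j _ => ?_
        rw [key j k]; ring
    _ = - Qf A f := by rw [Qf]; simp
  linear_combination h / 2

lemma Qf_W {N : ℕ} (f : Fin N → Bool) :
    Qf (Wmat N) f = (1/(N:ℂ)) * (∑ j, signC (f j))^2 := by
  unfold Qf
  rw [sq, Finset.sum_mul_sum, Finset.mul_sum]
  refine Finset.sum_congr rfl fun j _ => ?_
  rw [Finset.mul_sum]
  refine Finset.sum_congr rfl fun k _ => ?_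
  simp only [Wmat, Matrix.of_apply]
  ring

lemma sum_one_sub {N : ℕ} (p : Fin N) (c : Fin N → ℂ) :
    ∑ j, (1 - 2 * (if j = p then (1:ℂ) else 0)) * c j = (∑ j, c j) - 2 * c p := by
  have h : ∀ j, (1 - 2 * (if j = p then (1:ℂ) else 0)) * c j
      = c j - (if j = p then 2 * c j else 0) := by
    intro j; by_cases h : j = p <;> simp [h] <;> ring
  simp only [h, Finset.sum_sub_distrib, Finset.sum_ite_eq' Finset.univ p]
  simp

lemma sum_one_sub2 {N : ℕ} (p q : Fin N) (hpq : p ≠ q) (c : Fin N → ℂ) :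
    ∑ j, (1 - 2 * (if j = p ∨ j = q then (1:ℂ) else 0)) * c j
      = (∑ j, c j) - 2 * c p - 2 * c q := by
  have h : ∀ j, (1 - 2 * (if j = p ∨ j = q then (1:ℂ) else 0)) * c j
      = c j - (if j = p then 2 * c j else 0) - (if j = q then 2 * c j else 0) := by
    intro j
    by_cases h1 : j = p
    · subst h1; simp [hpq]; ring
    · by_cases h2 : j = q
      · subst h2; simp [h1, Ne.symm hpq]; try ring
      · simp [h1, h2]
        try ring
  simp only [h, Finset.sum_sub_distrib, Finset.sum_ite_eq' Finset.univ p,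
    Finset.sum_ite_eq' Finset.univ q]
  simp

lemma Qf_eq_sum {N : ℕ} (M : Matrix (Fin N) (Fin N) ℂ) (f : Fin N → Bool) :
    Qf M f = ∑ j, (1 - 2 * (if f j then (1:ℂ) else 0))
      * ∑ k, (1 - 2 * (if f k then (1:ℂ) else 0)) * M j k := by
  have hs : ∀ b : Bool, signC b = 1 - 2 * (if b then (1:ℂ) else 0) := by
    intro b; cases b <;> simp [signC] <;> ring
  unfold Qf
  refine Finset.sum_congr rfl fun j _ => ?_
  rw [Finset.mul_sum]
  refine Finset.sum_congr rfl fun k _ => ?_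
  rw [hs, hs]; ring

lemma Qf_one {N : ℕ} (M : Matrix (Fin N) (Fin N) ℂ) (p : Fin N) :
    Qf M (fun x => decide (x = p)) =
      (∑ j, ∑ k, M j k) - 2*(∑ k, M p k) - 2*(∑ j, M j p) + 4 * M p p := by
  rw [Qf_eq_sum]
  simp only [decide_eq_true_eq]
  have hk : ∀ j, (∑ k, (1 - 2 * (if k = p then (1:ℂ) else 0)) * M j k)
      = (∑ k, M j k) - 2 * M j p := fun j => sum_one_sub p (fun k => M j k)
  simp only [hk]
  rw [sum_one_sub p (fun j => (∑ k, M j k) - 2 * M j p)]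
  rw [Finset.sum_sub_distrib]
  have : ∑ j, 2 * M j p = 2 * ∑ j, M j p := by rw [Finset.mul_sum]
  rw [this]; ring

lemma Qf_two {N : ℕ} (M : Matrix (Fin N) (Fin N) ℂ) (p q : Fin N) (hpq : p ≠ q) :
    Qf M (fun x => decide (x = p ∨ x = q)) =
      (∑ j, ∑ k, M j k) - 2*(∑ k, M p k) - 2*(∑ k, M q k) - 2*(∑ j, M j p) - 2*(∑ j, M j q)
        + 4 * (M p p + M p q + M q p + M q q) := by
  rw [Qf_eq_sum]
  simp only [decide_eq_true_eq]
  have hk : ∀ j, (∑ k, (1 - 2 * (if k = p ∨ k = q then (1:ℂ) else 0)) * M j k)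
      = (∑ k, M j k) - 2 * M j p - 2 * M j q := fun j => sum_one_sub2 p q hpq (fun k => M j k)
  simp only [hk]
  rw [sum_one_sub2 p q hpq (fun j => (∑ k, M j k) - 2 * M j p - 2 * M j q)]
  rw [Finset.sum_sub_distrib, Finset.sum_sub_distrib]
  have h1 : ∑ j, 2 * M j p = 2 * ∑ j, M j p := by rw [Finset.mul_sum]
  have h2 : ∑ j, 2 * M j q = 2 * ∑ j, M j q := by rw [Finset.mul_sum]
  rw [h1, h2]; ring

lemma comp_swap_one {N : ℕ} (p q : Fin N) :
    (fun x => decide (x = p)) ∘ (Equiv.swap p q) = fun x => decide (x = q) := by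
  funext x
  simp only [Function.comp_apply, decide_eq_decide]
  rw [Equiv.apply_eq_iff_eq_symm_apply, Equiv.symm_swap, Equiv.swap_apply_left]

lemma comp_swap_two {N : ℕ} (p q q' : Fin N) (h1 : p ≠ q) (h2 : p ≠ q') :
    (fun x => decide (x = p ∨ x = q)) ∘ (Equiv.swap q q') = fun x => decide (x = p ∨ x = q') := by
  funext x
  simp only [Function.comp_apply, decide_eq_decide]
  rw [Equiv.apply_eq_iff_eq_symm_apply, Equiv.apply_eq_iff_eq_symm_apply, Equiv.symm_swap,
    Equiv.swap_apply_left, Equiv.swap_apply_of_ne_of_ne h1 h2]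


/-- For the pseudopure starting state `ρ = ((1-α/N)/N)·𝟙 + (α/N)·W` with `α ≠ 0`,
the expectation value `Tr(M U_f ρ U_f^†)` is invariant under all permutations of the
arguments of `f` if and only if `M = c·W + D + A` with `D` diagonal and `A` antisymmetric. -/
theorem permutation_invariance_iff (n : ℕ) (hn : 1 ≤ n) (α : ℝ) (hα : α ≠ 0)
    (M ρ : Matrix (Fin (2 ^ n)) (Fin (2 ^ n)) ℂ)
    (hρ : ρ = ((1 - (α : ℂ) / (2 ^ n : ℂ)) / (2 ^ n : ℂ)) • (1 : Matrix (Fin (2 ^ n)) (Fin (2 ^ n)) ℂ)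
            + ((α : ℂ) / (2 ^ n : ℂ)) • Wmat (2 ^ n)) :
    (∀ (σ : Equiv.Perm (Fin (2 ^ n))) (f : Fin (2 ^ n) → Bool),
        (M * (Uf (f ∘ σ) * ρ * (Uf (f ∘ σ))ᴴ)).trace = (M * (Uf f * ρ * (Uf f)ᴴ)).trace)
      ↔ ∃ (c : ℂ) (D A : Matrix (Fin (2 ^ n)) (Fin (2 ^ n)) ℂ),
          D.IsDiag ∧ Aᵀ = -A ∧ M = c • Wmat (2 ^ n) + D + A := by
  have hN2 : 1 < 2 ^ n := by
    have : 2 ^ 1 ≤ 2 ^ n := Nat.pow_le_pow_right (by norm_num) hn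
    omega
  have hNC : ((2 ^ n : ℕ) : ℂ) ≠ 0 := by
    simp only [Nat.cast_pow, Nat.cast_ofNat]
    exact pow_ne_zero _ two_ne_zero
  constructor
  · intro h
    have hb : ((α:ℂ) / (2 ^ n : ℂ)) / ((2 ^ n : ℕ) : ℂ) ≠ 0 := by
      have h1 : (α : ℂ) ≠ 0 := Complex.ofReal_ne_zero.mpr hα
      have h2 : ((2:ℂ) ^ n) ≠ 0 := pow_ne_zero _ two_ne_zero
      exact div_ne_zero (div_ne_zero h1 h2) hNC
    have hQ : ∀ (σ : Equiv.Perm (Fin (2 ^ n))) (f : Fin (2 ^ n) → Bool),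
        Qf M (f ∘ σ) = Qf M f := by
      intro σ f
      have hh := h σ f
      rw [hρ, trace_formula, trace_formula] at hh
      exact mul_left_cancel₀ hb (add_left_cancel hh)
    have E1 : ∀ p q : Fin (2 ^ n), (∑ k, M p k) + (∑ j, M j p) - 2 * M p p
        = (∑ k, M q k) + (∑ j, M j q) - 2 * M q q := by
      intro p q
      have hh := hQ (Equiv.swap p q) (fun x => decide (x = p))
      rw [comp_swap_one, Qf_one, Qf_one] at hh
      linear_combination hh / 2
    have E2 : ∀ p q q' : Fin (2 ^ n), p ≠ q → p ≠ q' →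
        M p q + M q p = M p q' + M q' p := by
      intro p q q' h1 h2
      rcases eq_or_ne q q' with rfl | hqq'
      · rfl
      · have hh := hQ (Equiv.swap q q') (fun x => decide (x = p ∨ x = q))
        rw [comp_swap_two p q q' h1 h2, Qf_two M p q' h2, Qf_two M p q h1] at hh
        have e1 := E1 q q'
        linear_combination e1 / 2 - hh / 4
    have Bc : ∀ p q p' q' : Fin (2 ^ n), p ≠ q → p' ≠ q' →
        M p q + M q p = M p' q' + M q' p' := by
      intro p q p' q' h1 h2
      rcases eq_or_ne p q' with rfl | hpq'
      · rcases eq_or_ne q p' with rfl | hqp'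
        · exact add_comm _ _
        · have h3 : q ≠ p := fun e => h1 e.symm
          calc M p q + M q p = M q p + M p q := add_comm _ _
          _ = M q p' + M p' q := E2 q p p' h3 hqp'
          _ = M p' q + M q p' := add_comm _ _
          _ = M p' p + M p p' := E2 p' q p (fun e => hqp' e.symm) h2
      · calc M p q + M q p = M p q' + M q' p := E2 p q q' h1 hpq'
        _ = M q' p + M p q' := add_comm _ _
        _ = M q' p' + M p' q' := E2 q' p p' (fun e => hpq' e.symm) (fun e => h2 e.symm)
        _ = M p' q' + M q' p' := add_comm _ _
    set i0 : Fin (2 ^ n) := ⟨0, by omega⟩ with hi0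
    set i1 : Fin (2 ^ n) := ⟨1, hN2⟩ with hi1
    have hi : i0 ≠ i1 := by simp [hi0, hi1, Fin.ext_iff]
    set c : ℂ := ((2 ^ n : ℕ) : ℂ) * (M i0 i1 + M i1 i0) / 2 with hc
    refine ⟨c, M - c • Wmat (2 ^ n) - (2⁻¹ : ℂ) • (M - Mᵀ), (2⁻¹ : ℂ) • (M - Mᵀ), ?_, ?_, ?_⟩
    · intro p q hpq
      have hB := Bc p q i0 i1 hpq hi
      simp only [Matrix.sub_apply, Matrix.smul_apply, Wmat, Matrix.of_apply,
        Matrix.transpose_apply, smul_eq_mul, hc]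
      have hx : ((2 ^ n : ℕ) : ℂ) * (M i0 i1 + M i1 i0) / 2 * (1 / ((2 ^ n : ℕ) : ℂ))
          = (M i0 i1 + M i1 i0) / 2 := by
        field_simp
      rw [hx]
      linear_combination hB / 2
    · ext i j
      simp only [Matrix.transpose_apply, Matrix.neg_apply, Matrix.smul_apply,
        Matrix.sub_apply, smul_eq_mul]
      ring
    · ext i j
      simp only [Matrix.add_apply, Matrix.sub_apply, Matrix.smul_apply, smul_eq_mul]
      ring
  · rintro ⟨c, D, A, hD, hA, hM⟩
    intro σ f
    suffices hq : Qf M (f ∘ σ) = Qf M f by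
      rw [hρ, trace_formula, trace_formula, hq]
    have hsum : (∑ j, signC ((f ∘ σ) j)) = ∑ j, signC (f j) :=
      Equiv.sum_comp σ (fun j => signC (f j))
    rw [hM, Qf_add, Qf_add, Qf_add, Qf_add, Qf_smul, Qf_smul, Qf_diag hD, Qf_diag hD,
      Qf_anti hA, Qf_anti hA, Qf_W, Qf_W, hsum]
end

section
/- For every i ∈ Fin n and every function f in the class C_N (i.e., f : Fin N → Bool such that either f or its pointwise complement takes the value true on exactly N/4 arguments with any two true-arguments at Hamming distance different from 1), f is balanced with respect to I_x^i: S_{I_x^i}(f) = 0. -/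
open Matrix BigOperators

/-- `S_B(f) = ∑_{j,k} (-1)^{f j} (-1)^{f k} B_{jk}`. -/
noncomputable def Sval {N : ℕ} (B : Matrix (Fin N) (Fin N) ℂ) (f : Fin N → Bool) : ℂ :=
  ∑ j, ∑ k, signC (f j) * signC (f k) * B j k

/-- The Hamming distance between two indices `l m : Fin (2^n)`, viewed as `n`-bit strings:
the number of bit positions at which they differ. -/
def hdist (n : ℕ) (l m : Fin (2 ^ n)) : ℕ :=
  (Finset.univ.filter fun i : Fin n => l.val.testBit i ≠ m.val.testBit i).card

/-- The spin operator `I_x^i`: entry `(l,m)` is `1/2` if the bit strings of `l` and `m`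
differ exactly at bit `i` (and agree at all other bits), and `0` otherwise. -/
noncomputable def Ix (n : ℕ) (i : Fin n) : Matrix (Fin (2 ^ n)) (Fin (2 ^ n)) ℂ :=
  Matrix.of fun l m =>
    if (l.val.testBit i ≠ m.val.testBit i)
        ∧ ∀ i' : Fin n, i' ≠ i → l.val.testBit i' = m.val.testBit i'
    then (1 / 2 : ℂ) else 0

/-- `g` takes the value true on exactly `N/4` arguments, any two of which are at
Hamming distance different from 1. -/
def goodFun (n : ℕ) (g : Fin (2 ^ n) → Bool) : Prop :=
  (Finset.univ.filter fun j : Fin (2 ^ n) => g j = true).card = 2 ^ n / 4 ∧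
    ∀ j k : Fin (2 ^ n), g j = true → g k = true → j ≠ k → hdist n j k ≠ 1

/-- The class `C_N`: functions `f` such that `f` or its pointwise complement is good. -/
def inCN (n : ℕ) (f : Fin (2 ^ n) → Bool) : Prop :=
  goodFun n f ∨ goodFun n (fun j => ! f j)

/-!
`I_x^i` is half the permutation matrix of the involution `σ` flipping bit `i`, so
`S(f) = ½ ∑_j (-1)^{f j} (-1)^{f (σ j)}`. Complementing `f` does not change `S`, so we may assume
that `f` itself is true on a set `T` of size `N/4` with no two points at Hamming distance 1.
Since `j` and `σ j` are at distance 1, `T` and `σ T` are disjoint, so the summand is `-1` exactly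
on `T ∪ σ T`, a set of size `N/2`, and the sum vanishes.
-/

def flipBit (n : ℕ) (i : Fin n) (l : Fin (2 ^ n)) : Fin (2 ^ n) :=
  ⟨l.val ^^^ 2 ^ (i : ℕ), Nat.xor_lt_two_pow l.isLt (Nat.pow_lt_pow_right one_lt_two i.isLt)⟩

section FlipBit

variable {n : ℕ} (i : Fin n)

lemma testBit_flipBit (l : Fin (2 ^ n)) (j : ℕ) :
    (flipBit n i l).val.testBit j = (l.val.testBit j ^^ decide ((i : ℕ) = j)) := by
  simp [flipBit, Nat.testBit_xor, Nat.testBit_two_pow]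

lemma flipBit_involutive : Function.Involutive (flipBit n i) := by
  intro l
  simp [flipBit]

lemma flipBit_ne (l : Fin (2 ^ n)) : flipBit n i l ≠ l := by
  intro h
  simpa [testBit_flipBit] using congrArg (fun x : Fin (2 ^ n) => x.val.testBit i) h

lemma hdist_flipBit (l : Fin (2 ^ n)) : hdist n l (flipBit n i l) = 1 := by
  have hbits : (Finset.univ.filter fun j : Fin n =>
      l.val.testBit j ≠ (flipBit n i l).val.testBit j) = {i} := by
    ext j
    by_cases hj : i = j <;> simp [testBit_flipBit, Fin.val_eq_val, hj, eq_comm]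
  rw [hdist, hbits, Finset.card_singleton]

end FlipBit

lemma Fin.eq_of_testBit_eq {n : ℕ} {l m : Fin (2 ^ n)}
    (h : ∀ j : Fin n, l.val.testBit j = m.val.testBit j) : l = m := by
  refine Fin.ext (Nat.eq_of_testBit_eq fun j => ?_)
  rcases lt_or_ge j n with hj | hj
  · exact h ⟨j, hj⟩
  · have hpow : 2 ^ n ≤ 2 ^ j := Nat.pow_le_pow_right two_pos hj
    rw [Nat.testBit_eq_false_of_lt (l.isLt.trans_le hpow),
      Nat.testBit_eq_false_of_lt (m.isLt.trans_le hpow)]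

lemma eq_flipBit_iff {n : ℕ} (i : Fin n) (l m : Fin (2 ^ n)) :
    m = flipBit n i l ↔ (l.val.testBit i ≠ m.val.testBit i)
        ∧ ∀ i' : Fin n, i' ≠ i → l.val.testBit i' = m.val.testBit i' := by
  constructor
  · rintro rfl
    refine ⟨by simp [testBit_flipBit], fun i' hi' => ?_⟩
    simp [testBit_flipBit, Fin.val_ne_of_ne (Ne.symm hi')]
  · rintro ⟨hi, hother⟩
    refine Fin.eq_of_testBit_eq fun j => ?_
    rw [testBit_flipBit]
    by_cases hj : j = i
    · subst hj
      simpa using Bool.eq_not.mpr (Ne.symm hi)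
    · simp [hother j hj, Fin.val_ne_of_ne (Ne.symm hj)]

lemma Ix_apply {n : ℕ} (i : Fin n) (l m : Fin (2 ^ n)) :
    Ix n i l m = if m = flipBit n i l then (1 / 2 : ℂ) else 0 := by
  simp only [Ix, Matrix.of_apply, eq_flipBit_iff]

lemma signC_not (b : Bool) : signC (!b) = -signC b := by
  cases b <;> simp [signC]

lemma signC_mul_signC_of_not_and {a b : Bool} (h : ¬(a = true ∧ b = true)) :
    signC a * signC b = 1 - 2 * (if a then 1 else 0) - 2 * (if b then 1 else 0) := by
  cases a <;> cases b <;> simp_all [signC] <;> norm_num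

lemma Sval_not {N : ℕ} (B : Matrix (Fin N) (Fin N) ℂ) (f : Fin N → Bool) :
    Sval B (fun j => !f j) = Sval B f := by
  simp only [Sval, signC_not, neg_mul_neg]

lemma Sval_of_apply_eq_ite {N : ℕ} (B : Matrix (Fin N) (Fin N) ℂ) (σ : Fin N → Fin N) (c : ℂ)
    (hB : ∀ j k, B j k = if k = σ j then c else 0) (f : Fin N → Bool) :
    Sval B f = c * ∑ j, signC (f j) * signC (f (σ j)) := by
  simp [Sval, hB, Finset.mul_sum, mul_comm]

lemma sum_signC_mul_signC_comp {α : Type*} [Fintype α] {σ : α → α} (hσ : σ.Bijective)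
    (g : α → Bool) (hg : ∀ j, ¬(g j = true ∧ g (σ j) = true)) :
    ∑ j, signC (g j) * signC (g (σ j))
      = Fintype.card α - 4 * (Finset.univ.filter fun j => g j = true).card := by
  have htrue : ∑ j, (if g j = true then (1 : ℂ) else 0)
      = (Finset.univ.filter fun j => g j = true).card := by
    rw [Finset.sum_boole]
  simp only [fun j => signC_mul_signC_of_not_and (hg j), Finset.sum_sub_distrib,
    ← Finset.mul_sum, hσ.sum_comp (fun j => if g j = true then (1 : ℂ) else 0), htrue]
  simp only [Finset.sum_const, Finset.card_univ, nsmul_eq_mul, mul_one]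
  ring

lemma Sval_Ix_of_goodFun {n : ℕ} (hn : 2 ≤ n) (i : Fin n) {g : Fin (2 ^ n) → Bool}
    (hg : goodFun n g) : Sval (Ix n i) g = 0 := by
  obtain ⟨hcard, hsep⟩ := hg
  have hdisj : ∀ j, ¬(g j = true ∧ g (flipBit n i j) = true) := fun j ⟨hj, hflip⟩ =>
    hsep j _ hj hflip (flipBit_ne i j).symm (hdist_flipBit i j)
  have hfour : 4 * (2 ^ n / 4) = 2 ^ n :=
    Nat.mul_div_cancel' (pow_dvd_pow 2 hn : 2 ^ 2 ∣ 2 ^ n)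
  rw [Sval_of_apply_eq_ite _ _ _ (Ix_apply i),
    sum_signC_mul_signC_comp (flipBit_involutive i).bijective g hdisj, hcard, Fintype.card_fin]
  have hcast : ((2 ^ n : ℕ) : ℂ) = 4 * (2 ^ n / 4 : ℕ) := by exact_mod_cast hfour.symm
  rw [hcast]
  ring

/-- Every function in the class `C_N` is balanced with respect to every `I_x^i`. -/
theorem CN_balanced_Ix (n : ℕ) (hn : 2 ≤ n) (i : Fin n)
    (f : Fin (2 ^ n) → Bool) (hf : inCN n f) :
    Sval (Ix n i) f = 0 := by
  rcases hf with hf | hf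
  · exact Sval_Ix_of_goodFun hn i hf
  · rw [← Sval_not]
    exact Sval_Ix_of_goodFun hn i hf
end

section
/- Deciding membership in C_N versus constancy requires at least 2^{n-1}+1 classical queries: for every subset K of Fin N with |K| ≤ N/2 = 2^{n-1}, there exists a function f' in C_N (moreover one taking the value true on exactly N/4 arguments with any two true-arguments at Hamming distance ≠ 1) such that f'(j) = false for every j ∈ K. Hence after querying f at any 2^{n-1} or fewer arguments and observing only the value false, both the hypothesis that f is constant and the hypothesis that f ∈ C_N remain possible. -/
open Matrix BigOperators

/-- Weight: number of set bits among the first `n` bits. -/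
def wt (n : ℕ) (l : Fin (2 ^ n)) : ℕ :=
  (Finset.univ.filter fun i : Fin n => l.val.testBit i).card

lemma hdist_parity (n : ℕ) (l m : Fin (2 ^ n)) :
    (hdist n l m) % 2 = (wt n l + wt n m) % 2 := by
  classical
  set s := Finset.univ.filter fun i : Fin n => l.val.testBit i with hs
  set t := Finset.univ.filter fun i : Fin n => m.val.testBit i with ht
  have hsd : (Finset.univ.filter fun i : Fin n => l.val.testBit i ≠ m.val.testBit i)
      = (s \ t) ∪ (t \ s) := by
    ext i
    simp only [Finset.mem_filter, Finset.mem_union, Finset.mem_sdiff, hs, ht,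
      Finset.mem_univ, true_and]
    constructor
    · intro h
      cases hb : l.val.testBit i <;> cases hc : m.val.testBit i <;> simp_all
    · rintro (⟨h1, h2⟩ | ⟨h1, h2⟩) <;> simp_all
  have hdisj : Disjoint (s \ t) (t \ s) := disjoint_sdiff_sdiff
  have h1 := Finset.card_sdiff_add_card_inter s t
  have h2 := Finset.card_sdiff_add_card_inter t s
  have h3 : (t ∩ s).card = (s ∩ t).card := by rw [Finset.inter_comm]
  have : hdist n l m = (s \ t).card + (t \ s).card := by
    rw [hdist, hsd, Finset.card_union_of_disjoint hdisj]
  rw [this, wt, wt, ← hs, ← ht]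
  omega

/-- For any set `K` of at most `2^{n-1}` queried arguments, there is a function `f'` in
`C_N` (indeed one taking the value true on exactly `N/4` arguments, any two of which are
at Hamming distance `≠ 1`) that is false on all of `K`.  Hence at least `2^{n-1} + 1`
classical queries are needed to distinguish membership in `C_N` from constancy. -/
theorem classical_query_lower_bound (n : ℕ) (hn : 2 ≤ n)
    (K : Finset (Fin (2 ^ n))) (hK : K.card ≤ 2 ^ (n - 1)) :
    ∃ f' : Fin (2 ^ n) → Bool,
      inCN n f' ∧ goodFun n f' ∧ ∀ j ∈ K, f' j = false := by
  classical
  -- partition univ \ K by parity of weight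
  set U : Finset (Fin (2 ^ n)) := Finset.univ \ K with hU
  have hUcard : 2 ^ (n - 1) ≤ U.card := by
    have h1 : U.card = 2 ^ n - K.card := by
      rw [hU, Finset.card_sdiff_of_subset (Finset.subset_univ K), Finset.card_univ, Fintype.card_fin]
    have hpow : 2 ^ n = 2 ^ (n - 1) + 2 ^ (n - 1) := by
      have : n - 1 + 1 = n := by omega
      calc 2 ^ n = 2 ^ (n - 1 + 1) := by rw [this]
        _ = 2 ^ (n - 1) + 2 ^ (n - 1) := by ring
    omega
  set U0 := U.filter (fun l => wt n l % 2 = 0) with hU0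
  set U1 := U.filter (fun l => wt n l % 2 = 1) with hU1
  have hsplit : U0.card + U1.card = U.card := by
    have he : U1 = U.filter (fun l => ¬ (wt n l % 2 = 0)) := by
      apply Finset.filter_congr
      intro x _
      exact ⟨fun h => by omega, fun h => by omega⟩
    rw [hU0, he, Finset.card_filter_add_card_filter_not]
  have hq : 2 ^ (n - 2) ≤ U0.card ∨ 2 ^ (n - 2) ≤ U1.card := by
    by_contra h
    push_neg at h
    have hpow : 2 ^ (n - 1) = 2 ^ (n - 2) + 2 ^ (n - 2) := by
      have : n - 2 + 1 = n - 1 := by omega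
      calc 2 ^ (n - 1) = 2 ^ (n - 2 + 1) := by rw [this]
        _ = 2 ^ (n - 2) + 2 ^ (n - 2) := by ring
    omega
  -- pick the big class
  obtain ⟨b, V, hVsub, hVcard, hVpar⟩ :
      ∃ (b : ℕ) (V : Finset (Fin (2 ^ n))), V ⊆ U ∧ 2 ^ (n - 2) ≤ V.card ∧
        ∀ l ∈ V, wt n l % 2 = b := by
    rcases hq with h | h
    · exact ⟨0, U0, Finset.filter_subset _ _, h, fun l hl => (Finset.mem_filter.mp hl).2⟩
    · exact ⟨1, U1, Finset.filter_subset _ _, h, fun l hl => (Finset.mem_filter.mp hl).2⟩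
  obtain ⟨S, hSsub, hScard⟩ := Finset.exists_subset_card_eq hVcard
  refine ⟨fun j => decide (j ∈ S), ?_, ?_, ?_⟩
  rotate_left
  · constructor
    · have : (Finset.univ.filter fun j : Fin (2 ^ n) => decide (j ∈ S) = true) = S := by
        ext j; simp
      rw [this, hScard]
      have h4 : 2 ^ n = 2 ^ (n - 2) * 4 := by
        have : n - 2 + 2 = n := by omega
        calc 2 ^ n = 2 ^ (n - 2 + 2) := by rw [this]
          _ = 2 ^ (n - 2) * 4 := by ring
      omega
    · intro j k hj hk hjk
      simp only [decide_eq_true_eq] at hj hk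
      have hpj := hVpar j (hSsub hj)
      have hpk := hVpar k (hSsub hk)
      have := hdist_parity n j k
      omega
  · intro j hj
    simp only [decide_eq_false_iff_not]
    intro hjS
    have := hSsub hjS
    rw [hU] at hVsub
    have := hVsub this
    simp only [Finset.mem_sdiff] at this
    exact this.2 hj
  · left
    constructor
    · have : (Finset.univ.filter fun j : Fin (2 ^ n) => decide (j ∈ S) = true) = S := by
        ext j; simp
      rw [this, hScard]
      have h4 : 2 ^ n = 2 ^ (n - 2) * 4 := by
        have : n - 2 + 2 = n := by omega
        calc 2 ^ n = 2 ^ (n - 2 + 2) := by rw [this]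
          _ = 2 ^ (n - 2) * 4 := by ring
      omega
    · intro j k hj hk hjk
      simp only [decide_eq_true_eq] at hj hk
      have hpj := hVpar j (hSsub hj)
      have hpk := hVpar k (hSsub hk)
      have := hdist_parity n j k
      omega
end

section
/- Let a, c₁, …, c_n be complex scalars, let ρ = a·𝟙 + ∑_{i=1}^n cᵢ·I_x^i, and let F_x = ∑_{i=1}^n I_x^i. Then the N×N matrix B with entries B_{jk} = (F_x)_{jk} · ρ_{kj} (no summation) equals (1/2)·∑_{i=1}^n cᵢ·I_x^i. (This uses the identity (I_x^i)_{lm}(I_x^{i'})_{ml} = δ_{ii'}/4 for all l, m.) -/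
open Matrix BigOperators

lemma Ix_symm (n : ℕ) (i : Fin n) (j k : Fin (2 ^ n)) : Ix n i j k = Ix n i k j := by
  unfold Ix
  simp only [Matrix.of_apply]
  congr 1
  rw [eq_iff_iff]
  constructor <;> rintro ⟨h1, h2⟩ <;> exact ⟨fun h => h1 h.symm, fun i' hi' => (h2 i' hi').symm⟩

lemma Ix_diag (n : ℕ) (i : Fin n) (j : Fin (2 ^ n)) : Ix n i j j = 0 := by
  unfold Ix
  simp

lemma Ix_sum_mul (n : ℕ) (i : Fin n) (j k : Fin (2 ^ n)) :
    (∑ i', Ix n i' j k) * Ix n i j k = (1 / 2 : ℂ) * Ix n i j k := by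
  unfold Ix
  simp only [Matrix.of_apply]
  by_cases h : (j.val.testBit i ≠ k.val.testBit i)
      ∧ ∀ i' : Fin n, i' ≠ i → j.val.testBit i' = k.val.testBit i'
  · rw [if_pos h]
    have : (∑ i' : Fin n, if (j.val.testBit i' ≠ k.val.testBit i')
        ∧ ∀ i'' : Fin n, i'' ≠ i' → j.val.testBit i''.val = k.val.testBit i''.val
        then (1 / 2 : ℂ) else 0) = 1 / 2 := by
      rw [Finset.sum_eq_single i]
      · rw [if_pos h]
      · intro i' _ hne
        rw [if_neg]
        rintro ⟨h1, h2⟩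
        exact h1 (h.2 i' hne)
      · simp
    rw [this]
  · rw [if_neg h, mul_zero, mul_zero]

/-- For `ρ = a·𝟙 + ∑ᵢ cᵢ I_x^i` and `F_x = ∑ᵢ I_x^i`, the matrix `B` with entries
`B_{jk} = (F_x)_{jk} ρ_{kj}` (no summation) equals `(1/2) ∑ᵢ cᵢ I_x^i`. -/
theorem B_of_thermal_state (n : ℕ) (hn : 1 ≤ n) (a : ℂ) (c : Fin n → ℂ)
    (ρ : Matrix (Fin (2 ^ n)) (Fin (2 ^ n)) ℂ)
    (hρ : ρ = a • (1 : Matrix (Fin (2 ^ n)) (Fin (2 ^ n)) ℂ) + ∑ i, c i • Ix n i) :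
    (Matrix.of fun j k => (∑ i, Ix n i) j k * ρ k j)
      = (1 / 2 : ℂ) • ∑ i, c i • Ix n i := by
  subst hρ
  funext j k
  simp only [Matrix.of_apply, Matrix.sum_apply, Matrix.add_apply, Matrix.smul_apply,
    Matrix.one_apply, smul_eq_mul]
  rw [mul_add]
  have h1 : (∑ i, Ix n i j k) * (a * if k = j then (1:ℂ) else 0) = 0 := by
    by_cases h : k = j
    · subst h
      simp [Ix_diag]
    · simp [h]
  rw [h1, zero_add, Finset.mul_sum, Finset.mul_sum]
  congr 1
  funext i
  rw [Ix_symm n i k j, mul_comm (c i), ← mul_assoc, Ix_sum_mul]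
  ring
end

section
/- For the two-spin case n = 2: let W be the 4×4 matrix with all entries 1/4, and suppose M is a 4×4 Hermitian complex matrix whose eigenvalues, with multiplicity, are -1, 0, 0, 1 (i.e., M is unitarily equivalent to F_x = I_x^1 + I_x^2 for two spins) and which has the form M = c·W + D + A with c real, D a real diagonal matrix, and A an antisymmetric matrix with purely imaginary entries. Then |c|/Λ(M) < √(2/3), where Λ(M) = 2 is the difference between the largest and smallest eigenvalue of M; that is, |c| < 2·√(2/3). -/
/-!
Off the diagonal every entry of `M` has real part `c/4`, since `D` is diagonal and `A` is purely
imaginary. Hence `tr M² = ∑ |M_jk|² ≥ 12 (c/4)² = 3c²/4`, while the spectrum `{-1, 0, 0, 1}`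
gives `tr M² = 2`, so `c² ≤ 8/3`. In the equality case every entry of `M` is forced:
`M = c/4 · (J - I)` with `J` the all-ones matrix, whose cube has trace `24 (c/4)³`; but the
spectrum gives `tr M³ = 0`, so `c = 0`, a contradiction.
-/

open Matrix
open Complex (normSq)

namespace Matrix

variable {n : Type*} [Fintype n] [DecidableEq n]

theorem trace_pow_unitary_conj {R : Type*} [CommRing R] [StarRing R] {U : Matrix n n R}
    (hU : U ∈ unitaryGroup n R) (D : Matrix n n R) (k : ℕ) :
    ((U * D * Uᴴ) ^ k).trace = (D ^ k).trace := by
  have h := map_pow (Unitary.conjStarAlgAut R (Matrix n n R) ⟨U, hU⟩) D k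
  simp only [Unitary.conjStarAlgAut_apply, star_eq_conjTranspose] at h
  rw [← h, trace_mul_cycle, ← star_eq_conjTranspose, Unitary.star_mul_self_of_mem hU, one_mul]

theorem IsHermitian.trace_sq {M : Matrix n n ℂ} (hM : M.IsHermitian) :
    (M ^ 2).trace = ∑ j, ∑ k, (normSq (M j k) : ℂ) := by
  simp only [sq, trace, diag, mul_apply]
  refine Finset.sum_congr rfl fun j _ => Finset.sum_congr rfl fun k _ => ?_
  rw [← hM.apply k j]
  exact Complex.mul_conj _

end Matrix

theorem re_smul_const_add_diagonal_add_apply {n : Type*} [DecidableEq n] {c : ℝ} {w : ℂ}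
    {d : n → ℂ} {A : Matrix n n ℂ} (hA : ∀ j k, (A j k).re = 0) {j k : n} (hjk : j ≠ k) :
    (((c : ℂ) • of (fun _ _ => w) + diagonal d + A : Matrix n n ℂ) j k).re = c * w.re := by
  simp [diagonal_apply_ne _ hjk, hA]

def offDiagConst (n : Type*) [DecidableEq n] (s : ℂ) : Matrix n n ℂ :=
  of fun j k => if j = k then 0 else s

theorem sum_normSq_offDiagConst {n : Type*} [Fintype n] [DecidableEq n] (s : ℝ) :
    ∑ j, ∑ k, normSq (offDiagConst n s j k) =
      ((Fintype.card n * (Fintype.card n - 1) : ℕ) : ℝ) * s ^ 2 := by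
  simp only [offDiagConst, of_apply, apply_ite normSq, map_zero, Complex.normSq_ofReal,
    Finset.sum_ite, Finset.sum_const_zero, zero_add, Finset.sum_const, Finset.filter_ne,
    Finset.mem_univ, Finset.card_erase_of_mem, Finset.card_univ, nsmul_eq_mul]
  push_cast
  ring

theorem trace_offDiagConst_fin_four_pow_three (s : ℂ) :
    ((offDiagConst (Fin 4) s) ^ 3).trace = 24 * s ^ 3 := by
  simp [offDiagConst, pow_succ, trace, mul_apply, Fin.sum_univ_four]
  ring

section EntrywiseBound

variable {n : Type*} [DecidableEq n] {M : Matrix n n ℂ} {s : ℝ}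
  (h : ∀ j k, j ≠ k → (M j k).re = s)
include h

theorem normSq_offDiagConst_le (j k : n) :
    normSq (offDiagConst n s j k) ≤ normSq (M j k) := by
  by_cases hjk : j = k
  · simp [offDiagConst, hjk, Complex.normSq_nonneg]
  · simp only [offDiagConst, of_apply, hjk, if_false, Complex.normSq_apply, h j k hjk,
      Complex.ofReal_re, Complex.ofReal_im]
    nlinarith [mul_self_nonneg (M j k).im]

theorem normSq_offDiagConst_lt {j k : n} (hne : M j k ≠ offDiagConst n s j k) :
    normSq (offDiagConst n s j k) < normSq (M j k) := by
  refine (normSq_offDiagConst_le h j k).lt_of_ne fun heq => hne ?_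
  by_cases hjk : j = k
  · simp only [offDiagConst, of_apply, hjk, if_true, map_zero] at heq ⊢
    exact Complex.normSq_eq_zero.mp heq.symm
  · simp only [offDiagConst, of_apply, hjk, if_false, Complex.normSq_apply, h j k hjk,
      Complex.ofReal_re, Complex.ofReal_im] at heq ⊢
    apply Complex.ext
    · simp [h j k hjk]
    · simp only [Complex.ofReal_im]
      nlinarith [mul_self_nonneg (M j k).im]

variable [Fintype n]

theorem sum_normSq_offDiagConst_le :
    ∑ j, ∑ k, normSq (offDiagConst n s j k) ≤ ∑ j, ∑ k, normSq (M j k) :=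
  Finset.sum_le_sum fun j _ => Finset.sum_le_sum fun k _ => normSq_offDiagConst_le h j k

theorem eq_offDiagConst_of_sum_normSq_le
    (hle : ∑ j, ∑ k, normSq (M j k) ≤ ∑ j, ∑ k, normSq (offDiagConst n s j k)) :
    M = offDiagConst n s := by
  by_contra hne
  obtain ⟨j, k, hjk⟩ : ∃ j k, M j k ≠ offDiagConst n s j k := by
    simpa [← Matrix.ext_iff] using hne
  refine hle.not_gt (Finset.sum_lt_sum (fun i _ => Finset.sum_le_sum fun l _ =>
    normSq_offDiagConst_le h i l) ⟨j, Finset.mem_univ j, ?_⟩)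
  exact Finset.sum_lt_sum (fun l _ => normSq_offDiagConst_le h j l)
    ⟨k, Finset.mem_univ k, normSq_offDiagConst_lt h hjk⟩

end EntrywiseBound

theorem two_spin_c_bound_general (M : Matrix (Fin 4) (Fin 4) ℂ) (hM : M.IsHermitian)
    (hEig : ∃ U ∈ Matrix.unitaryGroup (Fin 4) ℂ,
        M = U * Matrix.diagonal ![(-1 : ℂ), 0, 0, 1] * Uᴴ)
    (c : ℝ) (d : Fin 4 → ℝ) (A : Matrix (Fin 4) (Fin 4) ℂ)
    (hAim : ∀ j k, (A j k).re = 0)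
    (hform : M = (c : ℂ) • Matrix.of (fun _ _ : Fin 4 => (1 / 4 : ℂ))
        + Matrix.diagonal (fun j => (d j : ℂ)) + A) :
    |c| < 2 * Real.sqrt (2 / 3) := by
  obtain ⟨U, hU, hMU⟩ := hEig
  have htrace (k : ℕ) : (M ^ k).trace = (-1) ^ k + 0 ^ k + 0 ^ k + 1 := by
    simp [hMU, trace_pow_unitary_conj hU, diagonal_pow, trace_diagonal, Fin.sum_univ_four]
  have hre : ∀ j k, j ≠ k → (M j k).re = c / 4 := fun j k hjk => by
    rw [hform, re_smul_const_add_diagonal_add_apply hAim hjk]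
    norm_num [div_eq_mul_inv]
  have hnormSq : ∑ j, ∑ k, normSq (M j k) = 2 := by
    have h2 := htrace 2
    rw [hM.trace_sq] at h2
    norm_num at h2
    exact_mod_cast h2
  have hsum_offDiag :
      ∑ j, ∑ k, normSq (offDiagConst (Fin 4) (c / 4 : ℝ) j k) = 3 / 4 * c ^ 2 := by
    rw [sum_normSq_offDiagConst]
    norm_num
    ring
  have hle : c ^ 2 ≤ 8 / 3 := by
    have h := sum_normSq_offDiagConst_le hre
    rw [hsum_offDiag, hnormSq] at h
    linarith
  have hne : c ^ 2 ≠ 8 / 3 := fun hc => by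
    have hM' := eq_offDiagConst_of_sum_normSq_le hre (by rw [hsum_offDiag, hnormSq, hc]; norm_num)
    have h3 := htrace 3
    rw [hM', trace_offDiagConst_fin_four_pow_three] at h3
    have hc0 : c = 0 := by
      norm_num at h3
      exact_mod_cast h3
    norm_num [hc0] at hc
  refine abs_lt_of_sq_lt_sq ?_ (by positivity)
  rw [mul_pow, Real.sq_sqrt (by norm_num)]
  linarith [hle.lt_of_ne hne]

/-- Two-spin case: if a Hermitian `4 × 4` matrix `M` has eigenvalues `-1, 0, 0, 1` with
multiplicity (i.e. is unitarily equivalent to `F_x` for two spins) and has the form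
`M = c·W + D + A` with `c` real, `D` a real diagonal matrix, and `A` antisymmetric with
purely imaginary entries, then `|c|/Λ(M) < √(2/3)`, i.e. `|c| < 2√(2/3)` since
`Λ(M) = 2`. -/
theorem two_spin_c_bound (M : Matrix (Fin 4) (Fin 4) ℂ) (hM : M.IsHermitian)
    (hEig : ∃ U ∈ Matrix.unitaryGroup (Fin 4) ℂ,
        M = U * Matrix.diagonal ![(-1 : ℂ), 0, 0, 1] * Uᴴ)
    (c : ℝ) (d : Fin 4 → ℝ) (A : Matrix (Fin 4) (Fin 4) ℂ)
    (hA : Aᵀ = -A) (hAim : ∀ j k, (A j k).re = 0)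
    (hform : M = (c : ℂ) • Matrix.of (fun _ _ : Fin 4 => (1 / 4 : ℂ))
        + Matrix.diagonal (fun j => (d j : ℂ)) + A) :
    |c| < 2 * Real.sqrt (2 / 3) :=
  two_spin_c_bound_general M hM hEig c d A hAim hform
end
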